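/- Let n ≥ 1, let ρ_0, ..., ρ_{n−1} : ℝ → ℝ be measurable weight functions such that u ↦ u^i ρ_j(u) is Lebesgue integrable on ℝ for all 0 ≤ i ≤ n and 0 ≤ j ≤ n−1, and set μ_{ij} = ∫_ℝ u^i ρ_j(u) du. Then for every z ∈ ℝ, n! · det(z·μ_{ij} − μ_{i+1,j})_{0≤i,j≤n−1} = ∫_{ℝ^n} Δ_n(u) Δ_n^{(ρ)}(u) ∏_{k=1}^n (z − u_k) du_1 ⋯ du_n (a Heine-type integral formula). -/

import Mathlib

/-!
The integrand factors as `det (u_k^i (z - u_k)) · det (ρ_ℓ(u_k))`, since multiplying column `k`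
of the Vandermonde matrix by `z - u_k` multiplies its determinant by `∏ₖ (z - u_k)`. Andréief's
identity `∫ det (f_i(u_k)) det (g_j(u_k)) du = n! det (∫ f_i g_j)` turns this into `n!` times the
determinant of the moments `∫ u^i (z - u) ρ_j(u) du = z μ_{ij} - μ_{i+1,j}`.
-/

open MeasureTheory Finset Equiv

namespace Matrix

variable {ι R : Type*} [Fintype ι] [DecidableEq ι] [CommRing R]

theorem det_mul_det_eq_sum_sum_sign_prod (A B : Matrix ι ι R) :
    A.det * B.det =
      ∑ σ : Perm ι, ∑ τ : Perm ι, (Perm.sign σ * Perm.sign τ) • ∏ k, A (σ k) k * B (τ k) k := by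
  rw [det_apply, det_apply, sum_mul_sum]
  refine sum_congr rfl fun σ _ => sum_congr rfl fun τ _ => ?_
  rw [prod_mul_distrib, smul_mul_smul_comm, mul_smul]

/-- The double alternating sum reduces to a single determinant since, for fixed `τ`, the sum over
`σ` is the determinant of `M` with columns permuted by `τ`, i.e. `sign τ • det M`. -/
theorem sum_sum_sign_prod_eq_factorial_mul_det (M : Matrix ι ι R) :
    ∑ σ : Perm ι, ∑ τ : Perm ι, (Perm.sign σ * Perm.sign τ) • ∏ k, M (σ k) (τ k) =
      (Fintype.card ι).factorial • M.det := by
  rw [sum_comm]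
  have column_sum (τ : Perm ι) :
      ∑ σ : Perm ι, (Perm.sign σ * Perm.sign τ) • ∏ k, M (σ k) (τ k) = M.det := by
    have permuted : (M.submatrix id τ).det = Perm.sign τ • M.det := by
      rw [det_permute', Units.smul_def, zsmul_eq_mul]
    rw [det_apply] at permuted
    simp only [submatrix_apply, id] at permuted
    simp_rw [mul_comm (Perm.sign _) (Perm.sign τ), mul_smul, ← smul_sum, permuted, smul_smul,
      Int.units_mul_self, one_smul]
  rw [sum_congr rfl fun τ _ => column_sum τ, sum_const, card_univ, Fintype.card_perm]

end Matrix

section Andreief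

variable {ι α 𝕜 : Type*} [Fintype ι] [DecidableEq ι] [MeasurableSpace α] [RCLike 𝕜]

theorem integral_det_mul_det_eq_factorial_mul_det (μ : Measure α) [SigmaFinite μ]
    (f g : ι → α → 𝕜) (hfg : ∀ i j, Integrable (fun x => f i x * g j x) μ) :
    ∫ x : ι → α, (Matrix.of fun i k => f i (x k)).det * (Matrix.of fun j k => g j (x k)).det
        ∂(Measure.pi fun _ => μ) =
      ((Fintype.card ι).factorial : 𝕜) * (Matrix.of fun i j => ∫ x, f i x * g j x ∂μ).det := by
  have term_integrable (σ τ : Perm ι) : Integrable (fun x : ι → α =>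
      (Perm.sign σ * Perm.sign τ) • ∏ k, f (σ k) (x k) * g (τ k) (x k)) (Measure.pi fun _ => μ) :=
    (Integrable.fintype_prod (f := fun k x => f (σ k) x * g (τ k) x)
      fun k => hfg (σ k) (τ k)).smul _
  have term_integral (σ τ : Perm ι) :
      ∫ x : ι → α, (Perm.sign σ * Perm.sign τ) • ∏ k, f (σ k) (x k) * g (τ k) (x k)
          ∂(Measure.pi fun _ => μ) =
        (Perm.sign σ * Perm.sign τ) • ∏ k, ∫ x, f (σ k) x * g (τ k) x ∂μ := by
    simp_rw [Units.smul_def, zsmul_eq_mul]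
    rw [integral_const_mul, integral_fintype_prod_eq_prod (fun k x => f (σ k) x * g (τ k) x)]
  simp_rw [Matrix.det_mul_det_eq_sum_sum_sign_prod, Matrix.of_apply]
  rw [integral_finsetSum _ fun σ _ => integrable_finsetSum _ fun τ _ => term_integrable σ τ,
    ← nsmul_eq_mul, ← Matrix.sum_sum_sign_prod_eq_factorial_mul_det]
  refine sum_congr rfl fun σ _ => ?_
  rw [integral_finsetSum _ fun τ _ => term_integrable σ τ]
  exact sum_congr rfl fun τ _ => term_integral σ τ

end Andreief

theorem det_of_pow_mul_sub_eq_prod_mul_det_vandermonde {R : Type*} [CommRing R] {n : ℕ}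
    (u : Fin n → R) (z : R) :
    (Matrix.of fun i k : Fin n => u k ^ (i : ℕ) * (z - u k)).det =
      (∏ k, (z - u k)) * ∏ j : Fin n, ∏ k ∈ Ioi j, (u k - u j) := by
  rw [← Matrix.det_vandermonde, ← Matrix.det_transpose (Matrix.vandermonde u),
    ← Matrix.det_mul_row]
  congr 1
  ext i k
  simp [Matrix.vandermonde, mul_comm]

theorem heine_integral_formula_general
    (n : ℕ) (ρ : Fin n → ℝ → ℝ)
    (hint : ∀ (i : Fin (n + 1)) (j : Fin n),
      Integrable (fun u : ℝ => u ^ (i : ℕ) * ρ j u))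
    (z : ℝ) :
    (n.factorial : ℝ) *
        Matrix.det (Matrix.of fun i j : Fin n =>
          z * (∫ u : ℝ, u ^ (i : ℕ) * ρ j u) - ∫ u : ℝ, u ^ ((i : ℕ) + 1) * ρ j u)
      = ∫ u : Fin n → ℝ,
          (∏ j : Fin n, ∏ k ∈ Finset.Ioi j, (u k - u j)) *
            Matrix.det (Matrix.of fun ℓ k : Fin n => ρ ℓ (u k)) *
              ∏ k : Fin n, (z - u k) := by
  have moment_eq (i j : Fin n) : (fun u : ℝ => u ^ (i : ℕ) * (z - u) * ρ j u) =
      fun u => z * (u ^ (i : ℕ) * ρ j u) - u ^ ((i : ℕ) + 1) * ρ j u := by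
    ext u; ring
  have low (i j : Fin n) : Integrable fun u : ℝ => u ^ (i : ℕ) * ρ j u := by
    simpa using hint i.castSucc j
  have high (i j : Fin n) : Integrable fun u : ℝ => u ^ ((i : ℕ) + 1) * ρ j u := by
    simpa using hint i.succ j
  have hfg (i j : Fin n) : Integrable (fun u : ℝ => u ^ (i : ℕ) * (z - u) * ρ j u) := by
    rw [moment_eq]; exact ((low i j).const_mul z).sub (high i j)
  have andreief := integral_det_mul_det_eq_factorial_mul_det volume
    (fun (i : Fin n) u => u ^ (i : ℕ) * (z - u)) ρ hfg
  simp_rw [Fintype.card_fin, moment_eq, integral_sub ((low _ _).const_mul z) (high _ _),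
    integral_const_mul, det_of_pow_mul_sub_eq_prod_mul_det_vandermonde] at andreief
  rw [← andreief, ← volume_pi]
  congr 1 with u
  ring

/-- Heine-type integral formula: for measurable weights
`ρ 0, ..., ρ (n-1)` with integrable moments up to order `n`, setting
`μ i j = ∫ u^i ρ j u du`, one has for every real `z`:
`n! · det (z·μ i j − μ (i+1) j) = ∫_{ℝ^n} Δₙ(u) Δₙ^{(ρ)}(u) ∏ₖ (z − u k) du`,
where `Δₙ(u) = ∏_{j<k} (u k − u j)` and `Δₙ^{(ρ)}(u) = det (ρ ℓ (u k))`. -/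
theorem heine_integral_formula
    (n : ℕ) (hn : 1 ≤ n) (ρ : Fin n → ℝ → ℝ)
    (hmeas : ∀ j, Measurable (ρ j))
    (hint : ∀ (i : Fin (n + 1)) (j : Fin n),
      Integrable (fun u : ℝ => u ^ (i : ℕ) * ρ j u))
    (z : ℝ) :
    (n.factorial : ℝ) *
        Matrix.det (Matrix.of fun i j : Fin n =>
          z * (∫ u : ℝ, u ^ (i : ℕ) * ρ j u) - ∫ u : ℝ, u ^ ((i : ℕ) + 1) * ρ j u)
      = ∫ u : Fin n → ℝ,
          (∏ j : Fin n, ∏ k ∈ Finset.Ioi j, (u k - u j)) *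
            Matrix.det (Matrix.of fun ℓ k : Fin n => ρ ℓ (u k)) *
              ∏ k : Fin n, (z - u k) :=
  heine_integral_formula_general n ρ hint z
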